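/- Let V be a finite set of points in the Euclidean plane ℝ², let T and T' be two minimum spanning trees of V, and let u, v ∈ V be distinct. Then the maximum edge length on the unique path in T from u to v equals the maximum edge length on the unique path in T' from u to v. -/

import Mathlib

open scoped BigOperators

noncomputable section

/-- The Euclidean plane. -/
abbrev Pt : Type := EuclideanSpace ℝ (Fin 2)

/-- The length of an edge (an unordered pair of points): the Euclidean
distance between its endpoints. -/
def edgeLen : Sym2 Pt → ℝ :=
  Sym2.lift ⟨fun a b => dist a b, fun a b => dist_comm a b⟩

/-- The total length of a graph on the plane: the sum of the Euclidean
lengths of its edges. -/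
def glength (G : SimpleGraph Pt) : ℝ := ∑ᶠ e ∈ G.edgeSet, edgeLen e

/-- `G` is a spanning tree of the point set `V`: all its edges join points of
`V`, it is acyclic, and all points of `V` are pairwise connected in `G`. -/
def IsSpanningTreeOn (V : Set Pt) (G : SimpleGraph Pt) : Prop :=
  (∀ ⦃x y : Pt⦄, G.Adj x y → x ∈ V ∧ y ∈ V) ∧ G.IsAcyclic ∧
    ∀ x ∈ V, ∀ y ∈ V, G.Reachable x y

/-- `G` is a minimum spanning tree of the point set `V`. -/
def IsMSTOn (V : Set Pt) (G : SimpleGraph Pt) : Prop :=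
  IsSpanningTreeOn V G ∧
    ∀ H : SimpleGraph Pt, IsSpanningTreeOn V H → glength G ≤ glength H

/-!
Cut property of minimum spanning trees. Deleting an edge `ab` from a minimum spanning tree `T`
splits it into two components, and any edge `xy` joining them can replace `ab`; minimality gives
`|ab| ≤ |xy|`. If `ab` lies on the `T`-path from `u` to `v`, then `u` and `v` lie in different
components, since that path is the only `u`–`v` path in `T`. So every `u`–`v` path of another
spanning tree crosses the cut by an edge at least as long as `ab`. Hence the maximum on the
`T`-path is at most the maximum on the `T'`-path, and by symmetry they are equal.
-/

namespace SimpleGraph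

variable {α : Type*} {G : SimpleGraph α}

lemma Reachable.deleteEdges_reachable_or {w a : α} (h : G.Reachable w a) (b : α) :
    (G.deleteEdges {s(a, b)}).Reachable w a ∨ (G.deleteEdges {s(a, b)}).Reachable w b := by
  set G' := G.deleteEdges {s(a, b)}
  by_contra hw
  obtain ⟨p⟩ := h.symm
  obtain ⟨d, -, hd, hd'⟩ := p.exists_boundary_dart {z | G'.Reachable z a ∨ G'.Reachable z b}
    (Or.inl .rfl) hw
  apply hd'
  by_cases he : s(d.fst, d.snd) = s(a, b)
  · rcases Sym2.eq_iff.mp he with ⟨-, rfl⟩ | ⟨-, rfl⟩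
    · exact Or.inr .rfl
    · exact Or.inl .rfl
  · have hadj : G'.Adj d.snd d.fst := by
      rw [deleteEdges_adj, Set.mem_singleton_iff, Sym2.eq_swap]
      exact ⟨d.adj.symm, he⟩
    exact hd.imp hadj.reachable.trans hadj.reachable.trans

lemma IsAcyclic.not_reachable_deleteEdges_of_mem_edges (hG : G.IsAcyclic) {u v : α}
    {p : G.Walk u v} (hp : p.IsPath) {e : Sym2 α} (he : e ∈ p.edges) :
    ¬(G.deleteEdges {e}).Reachable u v := by
  classical
  rintro ⟨r⟩
  have hpr : p = (r.mapLe (deleteEdges_le _)).bypass :=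
    congrArg Subtype.val ((hG.subsingleton_path u v).elim ⟨p, hp⟩ ⟨_, Walk.bypass_isPath _⟩)
  have he' := Walk.edges_bypass_subset_edges _ (hpr ▸ he)
  rw [Walk.edges_mapLe_eq_edges] at he'
  simpa using r.edges_subset_edgeSet he'

end SimpleGraph

open SimpleGraph

lemma IsSpanningTreeOn.edgeSet_finite {V : Set Pt} (hV : V.Finite) {T : SimpleGraph Pt}
    (hT : IsSpanningTreeOn V T) : T.edgeSet.Finite := by
  refine ((hV.prod hV).image Sym2.mk.uncurry).subset fun e he => ?_
  induction e with
  | h x y => exact Set.sym2_eq_mk_image ▸ hT.1 he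

lemma glength_deleteEdges_sup_edge {G : SimpleGraph Pt} (hG : G.edgeSet.Finite) {e : Sym2 Pt}
    (he : e ∈ G.edgeSet) {x y : Pt} (hxy : x ≠ y) (hadj : ¬(G.deleteEdges {e}).Adj x y) :
    glength (G.deleteEdges {e} ⊔ edge x y) + edgeLen e = glength G + dist x y := by
  rw [← mem_edgeSet, edgeSet_deleteEdges] at hadj
  have hH : (G.deleteEdges {e} ⊔ edge x y).edgeSet = insert s(x, y) (G.edgeSet \ {e}) := by
    rw [edgeSet_sup, edgeSet_deleteEdges, edgeSet_edge_of_ne hxy, Set.union_singleton]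
  have hG' : glength G = edgeLen e + ∑ᶠ f ∈ G.edgeSet \ {e}, edgeLen f := by
    have he' : e ∉ G.edgeSet \ {e} := fun h => h.2 rfl
    rw [glength, ← finsum_mem_insert edgeLen he' hG.sdiff, Set.insert_sdiff_self_of_mem he]
  rw [glength, hH, finsum_mem_insert _ hadj hG.sdiff, hG']
  simp only [edgeLen, Sym2.lift_mk]
  ring

lemma IsSpanningTreeOn.deleteEdges_sup_edge {V : Set Pt} {T : SimpleGraph Pt}
    (hT : IsSpanningTreeOn V T) {a b x y : Pt} (ha : a ∈ V) (hx : x ∈ V) (hy : y ∈ V)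
    (hxy : ¬(T.deleteEdges {s(a, b)}).Reachable x y) :
    IsSpanningTreeOn V (T.deleteEdges {s(a, b)} ⊔ edge x y) := by
  obtain ⟨hTV, hTacyc, hTconn⟩ := hT
  set T' := T.deleteEdges {s(a, b)}
  set H := T' ⊔ edge x y
  have hne : x ≠ y := by rintro rfl; exact hxy .rfl
  have hxyH : H.Adj x y := Or.inr ((edge_adj ..).mpr ⟨Or.inl ⟨rfl, rfl⟩, hne⟩)
  have hreach : ∀ w ∈ V, T'.Reachable w a ∨ T'.Reachable w b :=
    fun w hw => (hTconn w hw a ha).deleteEdges_reachable_or b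
  have hba : H.Reachable b a := by
    rcases hreach x hx with hxa | hxb <;> rcases hreach y hy with hya | hyb
    · exact absurd (hxa.trans hya.symm) hxy
    · exact (hyb.symm.mono le_sup_left).trans (hxyH.reachable.symm.trans (hxa.mono le_sup_left))
    · exact (hxb.symm.mono le_sup_left).trans (hxyH.reachable.trans (hya.mono le_sup_left))
    · exact absurd (hxb.trans hyb.symm) hxy
  have hwa : ∀ w ∈ V, H.Reachable w a := fun w hw =>
    (hreach w hw).elim (·.mono le_sup_left) fun h => (h.mono le_sup_left).trans hba
  refine ⟨?_, (hTacyc.anti (deleteEdges_le _)).sup_edge_of_not_reachable hxy,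
    fun w hw z hz => (hwa w hw).trans (hwa z hz).symm⟩
  rintro w z (h | h)
  · exact hTV (deleteEdges_le _ h)
  · rcases (edge_adj ..).mp h with ⟨⟨rfl, rfl⟩ | ⟨rfl, rfl⟩, -⟩
    exacts [⟨hx, hy⟩, ⟨hy, hx⟩]

lemma IsMSTOn.dist_le_of_not_reachable_deleteEdges {V : Set Pt} (hV : V.Finite)
    {T : SimpleGraph Pt} (hT : IsMSTOn V T) {a b x y : Pt} (hab : T.Adj a b) (hx : x ∈ V)
    (hy : y ∈ V) (hxy : ¬(T.deleteEdges {s(a, b)}).Reachable x y) :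
    dist a b ≤ dist x y := by
  have hne : x ≠ y := by rintro rfl; exact hxy .rfl
  have hlen := glength_deleteEdges_sup_edge (hT.1.edgeSet_finite hV) hab hne
    fun h => hxy h.reachable
  have hmin := hT.2 _ (hT.1.deleteEdges_sup_edge (hT.1.1 hab).1 hx hy hxy)
  simp only [edgeLen, Sym2.lift_mk] at hlen
  linarith

lemma IsMSTOn.exists_edge_le_of_mem_edges {V : Set Pt} (hV : V.Finite) {T T' : SimpleGraph Pt}
    (hT : IsMSTOn V T) (hT' : IsSpanningTreeOn V T') {u v : Pt} {p : T.Walk u v} (hp : p.IsPath)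
    (q : T'.Walk u v) {e : Sym2 Pt} (he : e ∈ p.edges) :
    ∃ f ∈ q.edges, edgeLen e ≤ edgeLen f := by
  obtain ⟨d, -, rfl⟩ := List.mem_map.mp he
  have huv := hT.1.2.1.not_reachable_deleteEdges_of_mem_edges hp he
  obtain ⟨d', hd', hu, hv⟩ :=
    q.exists_boundary_dart {z | (T.deleteEdges {d.edge}).Reachable u z} .rfl huv
  have hV' := hT'.1 d'.adj
  exact ⟨d'.edge, List.mem_map_of_mem hd', hT.dist_le_of_not_reachable_deleteEdges hV d.adj
    hV'.1 hV'.2 fun h => hv (hu.trans h)⟩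

lemma IsMSTOn.maximum_le {V : Set Pt} (hV : V.Finite) {T T' : SimpleGraph Pt}
    (hT : IsMSTOn V T) (hT' : IsSpanningTreeOn V T') {u v : Pt} {p : T.Walk u v} (hp : p.IsPath)
    (q : T'.Walk u v) :
    (p.edges.map edgeLen).maximum ≤ (q.edges.map edgeLen).maximum := by
  refine List.maximum_le_of_forall_le fun r hr => ?_
  obtain ⟨e, he, rfl⟩ := List.mem_map.mp hr
  obtain ⟨f, hf, hle⟩ := hT.exists_edge_le_of_mem_edges hV hT' hp q he
  exact (WithBot.coe_le_coe.mpr hle).trans (List.le_maximum_of_mem' (List.mem_map_of_mem hf))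

theorem stmt13_general (V : Finset Pt) (T T' : SimpleGraph Pt)
    (hT : IsMSTOn ↑V T) (hT' : IsMSTOn ↑V T')
    (u v : Pt)
    (p : T.Walk u v) (hp : p.IsPath)
    (q : T'.Walk u v) (hq : q.IsPath) :
    (p.edges.map edgeLen).maximum = (q.edges.map edgeLen).maximum :=
  le_antisymm (hT.maximum_le V.finite_toSet hT'.1 hp q) (hT'.maximum_le V.finite_toSet hT.1 hq p)

theorem stmt13 (V : Finset Pt) (T T' : SimpleGraph Pt)
    (hT : IsMSTOn ↑V T) (hT' : IsMSTOn ↑V T')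
    (u v : Pt) (hu : u ∈ V) (hv : v ∈ V) (huv : u ≠ v)
    (p : T.Walk u v) (hp : p.IsPath)
    (q : T'.Walk u v) (hq : q.IsPath) :
    (p.edges.map edgeLen).maximum = (q.edges.map edgeLen).maximum :=
  stmt13_general V T T' hT hT' u v p hp q hq

end
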